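/- Let (X,d) be a δ-hyperbolic geodesic space and q > p > 2δ. Then the inclusion-induced map H₂(Rips(X,p)) → H₂(Rips(X,q)) on second simplicial homology of Vietoris–Rips complexes is surjective. -/

import Mathlib

/-- The simplicial boundary operator on formal `𝕜`-linear combinations of
`(n+1)`-tuples of vertices of `X`. -/
noncomputable def bdry (𝕜 : Type*) [Field 𝕜] (X : Type*) (n : ℕ) :
    ((Fin (n + 1) → X) →₀ 𝕜) →ₗ[𝕜] ((Fin n → X) →₀ 𝕜) :=
  Finsupp.lift ((Fin n → X) →₀ 𝕜) 𝕜 (Fin (n + 1) → X) fun σ =>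
    ∑ i : Fin (n + 1), ((-1 : 𝕜) ^ (i : ℕ)) • Finsupp.single (σ ∘ i.succAbove) 1

/-- The subspace of chains supported on tuples satisfying `K` (the simplices of
a simplicial complex, given as a predicate on tuples of vertices). -/
noncomputable def chainsIn (𝕜 : Type*) [Field 𝕜] {X : Type*} (n : ℕ)
    (K : (Fin n → X) → Prop) : Submodule 𝕜 ((Fin n → X) →₀ 𝕜) :=
  Submodule.span 𝕜 {c | ∃ σ, K σ ∧ c = Finsupp.single σ (1 : 𝕜)}

/-- The chain map induced by a vertex map `f : X → Y`. -/
noncomputable def pushChain (𝕜 : Type*) [Field 𝕜] {X Y : Type*} (n : ℕ) (f : X → Y) :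
    ((Fin n → X) →₀ 𝕜) →ₗ[𝕜] ((Fin n → Y) →₀ 𝕜) :=
  Finsupp.lmapDomain 𝕜 𝕜 fun σ : Fin n → X => f ∘ σ

/-- `g` parametrises a minimising geodesic from `x` to `y` (by arc length on
`[0, dist x y]`). -/
def IsGeodesicFrom {X : Type*} [MetricSpace X] (g : ℝ → X) (x y : X) : Prop :=
  g 0 = x ∧ g (dist x y) = y ∧
    ∀ s ∈ Set.Icc 0 (dist x y), ∀ t ∈ Set.Icc 0 (dist x y), dist (g s) (g t) = |s - t|


/-!
Choose geodesics and let `m(u, v)` be the midpoint of the one from `u` to `v`. Thinness of the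
triangle `x y z` gives the median estimate
`d(x, m(y, z)) ≤ δ + max (d(x, y)) (d(x, z)) - d(y, z) / 2`.

Let `c` be a 2-cycle of `Rips(X, t)`, `t ≥ 2δ`, and `θ = 2(δ + t)/3`. Cutting every edge longer
than `θ` at its midpoint, through 3-simplices of `Rips(X, t)`, replaces each triangle by
triangles of diameter `≤ θ`; the median estimate bounds the new edges because `θ ≥ 2δ` and
`δ + t - θ/2 = θ`. The bookkeeping is made local by the linear map
`c ↦ c + Σ [u, m(u, v), v]`, summed over the long edges `[u, v]` of `∂c`: it fixes cycles and
boundaries and kills the flat triangle of a long edge, so its value on a triangle is computed one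
3-simplex at a time. As `θ - 2δ = (2/3)(t - 2δ)`, finitely many steps reach the scale `p`.
-/

section

open Finsupp

variable {X : Type*}

section Chains

variable (𝕜 : Type*) [Field 𝕜]

@[simp] lemma vec_three_comp_succ (a b c : X) :
    ![a, b, c] ∘ Fin.succ = ![b, c] := by
  ext i; fin_cases i <;> rfl

@[simp] lemma vec_three_comp_succAbove_one (a b c : X) :
    ![a, b, c] ∘ (1 : Fin 3).succAbove = ![a, c] := by
  ext i; fin_cases i <;> rfl

@[simp] lemma vec_three_comp_succAbove_two (a b c : X) :
    ![a, b, c] ∘ (2 : Fin 3).succAbove = ![a, b] := by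
  ext i; fin_cases i <;> rfl

@[simp] lemma vec_four_comp_succ (a b c d : X) :
    ![a, b, c, d] ∘ Fin.succ = ![b, c, d] := by
  ext i; fin_cases i <;> rfl

@[simp] lemma vec_four_comp_succAbove_one (a b c d : X) :
    ![a, b, c, d] ∘ (1 : Fin 4).succAbove = ![a, c, d] := by
  ext i; fin_cases i <;> rfl

@[simp] lemma vec_four_comp_succAbove_two (a b c d : X) :
    ![a, b, c, d] ∘ (2 : Fin 4).succAbove = ![a, b, d] := by
  ext i; fin_cases i <;> rfl

@[simp] lemma vec_four_comp_succAbove_three (a b c d : X) :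
    ![a, b, c, d] ∘ (3 : Fin 4).succAbove = ![a, b, c] := by
  ext i; fin_cases i <;> rfl

lemma bdry_single {n : ℕ} (σ : Fin (n + 1) → X) :
    bdry 𝕜 X n (single σ 1) =
      ∑ i : Fin (n + 1), (-1 : 𝕜) ^ (i : ℕ) • single (σ ∘ i.succAbove) 1 := by
  simp [bdry]

lemma bdry_single_vec_three (a b c : X) :
    bdry 𝕜 X 2 (single ![a, b, c] 1) =
      single ![b, c] 1 - single ![a, c] 1 + single ![a, b] 1 := by
  simp [bdry_single, Fin.sum_univ_three, sub_eq_add_neg]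

lemma bdry_single_vec_four (a b c d : X) :
    bdry 𝕜 X 3 (single ![a, b, c, d] 1) =
      single ![b, c, d] 1 - single ![a, c, d] 1 + single ![a, b, d] 1 - single ![a, b, c] 1 := by
  simp [bdry_single, Fin.sum_univ_four, sub_eq_add_neg, pow_succ]

lemma bdry_bdry (b : (Fin 4 → X) →₀ 𝕜) : bdry 𝕜 X 2 (bdry 𝕜 X 3 b) = 0 := by
  induction b using Finsupp.induction_linear with
  | zero => simp
  | add f g hf hg => simp [hf, hg]
  | single τ k =>
    rw [← smul_single_one, map_smul, map_smul,
      show τ = ![τ 0, τ 1, τ 2, τ 3] from (FinVec.etaExpand_eq τ).symm]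
    convert smul_zero k
    simp only [bdry_single_vec_four, map_add, map_sub, bdry_single_vec_three]
    abel

lemma single_mem_chainsIn {n : ℕ} {K : (Fin n → X) → Prop} {σ : Fin n → X} (h : K σ) :
    single σ (1 : 𝕜) ∈ chainsIn 𝕜 n K :=
  Submodule.subset_span ⟨σ, h, rfl⟩

lemma chainsIn_mono {n : ℕ} {K K' : (Fin n → X) → Prop} (h : ∀ σ, K σ → K' σ) :
    chainsIn 𝕜 n K ≤ chainsIn 𝕜 n K' :=
  Submodule.span_mono fun _ ⟨σ, hσ, hc⟩ => ⟨σ, h σ hσ, hc⟩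

end Chains

section Rips

variable [MetricSpace X]

def IsRipsSimplex {n : ℕ} (r : ℝ) (σ : Fin n → X) : Prop :=
  ∀ i j, dist (σ i) (σ j) ≤ r

lemma IsRipsSimplex.mono {n : ℕ} {r r' : ℝ} {σ : Fin n → X} (hσ : IsRipsSimplex r σ)
    (h : r ≤ r') : IsRipsSimplex r' σ :=
  fun i j => (hσ i j).trans h

lemma isRipsSimplex_vec_three {r : ℝ} {a b c : X} (hab : dist a b ≤ r) (hac : dist a c ≤ r)
    (hbc : dist b c ≤ r) : IsRipsSimplex r ![a, b, c] := by
  have hr : 0 ≤ r := dist_nonneg.trans hab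
  intro i j
  fin_cases i <;> fin_cases j <;> simp [dist_comm, *]

lemma isRipsSimplex_vec_four {r : ℝ} {a b c d : X} (hab : dist a b ≤ r) (hac : dist a c ≤ r)
    (had : dist a d ≤ r) (hbc : dist b c ≤ r) (hbd : dist b d ≤ r) (hcd : dist c d ≤ r) :
    IsRipsSimplex r ![a, b, c, d] := by
  have hr : 0 ≤ r := dist_nonneg.trans hab
  intro i j
  fin_cases i <;> fin_cases j <;> simp [dist_comm, *]

variable (𝕜 : Type*) [Field 𝕜]

noncomputable def ripsBoundaries (r : ℝ) : Submodule 𝕜 ((Fin 3 → X) →₀ 𝕜) :=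
  (chainsIn 𝕜 4 (IsRipsSimplex r)).map (bdry 𝕜 X 3)

lemma ripsBoundaries_mono {r r' : ℝ} (h : r ≤ r') :
    ripsBoundaries 𝕜 (X := X) r ≤ ripsBoundaries 𝕜 r' :=
  Submodule.map_mono (chainsIn_mono 𝕜 fun _ hσ => hσ.mono h)

noncomputable def smallModBoundaries (θ r : ℝ) : Submodule 𝕜 ((Fin 3 → X) →₀ 𝕜) :=
  chainsIn 𝕜 3 (IsRipsSimplex θ) ⊔ ripsBoundaries 𝕜 r

end Rips

section FlatCorrection

variable (𝕜 : Type*) [Field 𝕜] [MetricSpace X] (mid : X → X → X) (θ : ℝ)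

noncomputable def longEdgeFlat :
    ((Fin 2 → X) →₀ 𝕜) →ₗ[𝕜] ((Fin 3 → X) →₀ 𝕜) :=
  Finsupp.lift _ 𝕜 _ fun e =>
    if θ < dist (e 0) (e 1) then single ![e 0, mid (e 0) (e 1), e 1] 1 else 0

noncomputable def flatCorrection :
    ((Fin 3 → X) →₀ 𝕜) →ₗ[𝕜] ((Fin 3 → X) →₀ 𝕜) :=
  LinearMap.id + longEdgeFlat 𝕜 mid θ ∘ₗ bdry 𝕜 X 2

lemma longEdgeFlat_single (u v : X) :
    longEdgeFlat 𝕜 mid θ (single ![u, v] 1) =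
      if θ < dist u v then single ![u, mid u v, v] 1 else 0 := by
  simp [longEdgeFlat]

lemma flatCorrection_apply (c : (Fin 3 → X) →₀ 𝕜) :
    flatCorrection 𝕜 mid θ c = c + longEdgeFlat 𝕜 mid θ (bdry 𝕜 X 2 c) := rfl

lemma flatCorrection_of_bdry_eq_zero {c : (Fin 3 → X) →₀ 𝕜} (hc : bdry 𝕜 X 2 c = 0) :
    flatCorrection 𝕜 mid θ c = c := by
  rw [flatCorrection_apply, hc, map_zero, add_zero]

lemma flatCorrection_bdry (b : (Fin 4 → X) →₀ 𝕜) :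
    flatCorrection 𝕜 mid θ (bdry 𝕜 X 3 b) = bdry 𝕜 X 3 b :=
  flatCorrection_of_bdry_eq_zero 𝕜 mid θ (bdry_bdry 𝕜 b)

lemma flatCorrection_single_of_le {x y z : X} (hxy : dist x y ≤ θ) (hxz : dist x z ≤ θ)
    (hyz : dist y z ≤ θ) :
    flatCorrection 𝕜 mid θ (single ![x, y, z] 1) = single ![x, y, z] 1 := by
  simp [flatCorrection_apply, bdry_single_vec_three, longEdgeFlat_single, not_lt.2, *]

lemma flatCorrection_flat_eq_zero {u v : X} (huv : θ < dist u v) (hum : dist u (mid u v) ≤ θ)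
    (hmv : dist (mid u v) v ≤ θ) :
    flatCorrection 𝕜 mid θ (single ![u, mid u v, v] 1) = 0 := by
  simp [flatCorrection_apply, bdry_single_vec_three, longEdgeFlat_single, not_lt.2, *]

end FlatCorrection

structure IsHyperbolicMidpoint [MetricSpace X] (δ : ℝ) (mid : X → X → X) : Prop where
  dist_left_le : ∀ u v, dist u (mid u v) ≤ dist u v / 2
  dist_right_le : ∀ u v, dist (mid u v) v ≤ dist u v / 2
  dist_le : ∀ x y z, dist x (mid y z) ≤ δ + max (dist x y) (dist x z) - dist y z / 2

section Reduction

variable {𝕜 : Type*} [Field 𝕜] [MetricSpace X] {mid : X → X → X} {θ t : ℝ}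

lemma flatCorrection_alternating_mem {a b c d : X} (hτ : IsRipsSimplex t ![a, b, c, d]) :
    flatCorrection 𝕜 mid θ (single ![b, c, d] 1) -
        flatCorrection 𝕜 mid θ (single ![a, c, d] 1) +
        flatCorrection 𝕜 mid θ (single ![a, b, d] 1) -
        flatCorrection 𝕜 mid θ (single ![a, b, c] 1) ∈ smallModBoundaries 𝕜 θ t := by
  have h : bdry 𝕜 X 3 (single ![a, b, c, d] 1) ∈ smallModBoundaries 𝕜 θ t :=
    Submodule.mem_sup_right (Submodule.mem_map_of_mem (single_mem_chainsIn 𝕜 hτ))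
  rw [← flatCorrection_bdry 𝕜 mid θ, bdry_single_vec_four] at h
  simpa only [map_add, map_sub] using h

lemma flatCorrection_mem_of_face_one {a b c d : X} (hτ : IsRipsSimplex t ![a, b, c, d])
    (h₀ : flatCorrection 𝕜 mid θ (single ![b, c, d] 1) ∈ smallModBoundaries 𝕜 θ t)
    (h₂ : flatCorrection 𝕜 mid θ (single ![a, b, d] 1) ∈ smallModBoundaries 𝕜 θ t)
    (h₃ : flatCorrection 𝕜 mid θ (single ![a, b, c] 1) ∈ smallModBoundaries 𝕜 θ t) :
    flatCorrection 𝕜 mid θ (single ![a, c, d] 1) ∈ smallModBoundaries 𝕜 θ t := by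
  convert sub_mem (sub_mem (add_mem h₀ h₂) h₃) (flatCorrection_alternating_mem hτ) using 1
  abel

lemma flatCorrection_mem_of_face_two {a b c d : X} (hτ : IsRipsSimplex t ![a, b, c, d])
    (h₀ : flatCorrection 𝕜 mid θ (single ![b, c, d] 1) ∈ smallModBoundaries 𝕜 θ t)
    (h₁ : flatCorrection 𝕜 mid θ (single ![a, c, d] 1) ∈ smallModBoundaries 𝕜 θ t)
    (h₃ : flatCorrection 𝕜 mid θ (single ![a, b, c] 1) ∈ smallModBoundaries 𝕜 θ t) :
    flatCorrection 𝕜 mid θ (single ![a, b, d] 1) ∈ smallModBoundaries 𝕜 θ t := by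
  convert add_mem (sub_mem (add_mem (flatCorrection_alternating_mem hτ) h₁) h₀) h₃ using 1
  abel

lemma flatCorrection_mem_of_le {x y z : X} (hxy : dist x y ≤ θ) (hxz : dist x z ≤ θ)
    (hyz : dist y z ≤ θ) :
    flatCorrection 𝕜 mid θ (single ![x, y, z] 1) ∈ smallModBoundaries 𝕜 θ t := by
  rw [flatCorrection_single_of_le 𝕜 mid θ hxy hxz hyz]
  exact Submodule.mem_sup_left (single_mem_chainsIn 𝕜 (isRipsSimplex_vec_three hxy hxz hyz))

variable {δ : ℝ} (hm : IsHyperbolicMidpoint δ mid) (hδ : 0 ≤ δ)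
  (hθ : 2 * (δ + t) ≤ 3 * θ)
include hm hδ hθ

lemma flatCorrection_mem_of_short_02_12 {u v w : X} (huv : dist u v ≤ t) (huw : dist u w ≤ θ)
    (hvw : dist v w ≤ θ) :
    flatCorrection 𝕜 mid θ (single ![u, v, w] 1) ∈ smallModBoundaries 𝕜 θ t := by
  by_cases hlong : θ < dist u v
  swap
  · exact flatCorrection_mem_of_le (not_lt.1 hlong) huw hvw
  have hum : dist u (mid u v) ≤ θ := (hm.dist_left_le u v).trans (by linarith)
  have hmv : dist (mid u v) v ≤ θ := (hm.dist_right_le u v).trans (by linarith)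
  have hwm : dist w (mid u v) ≤ θ := by
    have hmed := hm.dist_le w u v
    rw [dist_comm w u, dist_comm w v] at hmed
    linarith [max_le huw hvw]
  rw [dist_comm] at hwm
  have hτ : IsRipsSimplex t ![u, mid u v, v, w] :=
    isRipsSimplex_vec_four (by linarith) huv (by linarith) (by linarith) (by linarith)
      (by linarith)
  refine flatCorrection_mem_of_face_one hτ (flatCorrection_mem_of_le hmv hwm hvw)
    (flatCorrection_mem_of_le hum huw hwm) ?_
  rw [flatCorrection_flat_eq_zero 𝕜 mid θ hlong hum hmv]
  exact zero_mem _

lemma flatCorrection_mem_of_short_01_12 {u v w : X} (huv : dist u v ≤ θ) (huw : dist u w ≤ t)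
    (hvw : dist v w ≤ θ) :
    flatCorrection 𝕜 mid θ (single ![u, v, w] 1) ∈ smallModBoundaries 𝕜 θ t := by
  by_cases hlong : θ < dist u w
  swap
  · exact flatCorrection_mem_of_le huv (not_lt.1 hlong) hvw
  have hum : dist u (mid u w) ≤ θ := (hm.dist_left_le u w).trans (by linarith)
  have hmw : dist (mid u w) w ≤ θ := (hm.dist_right_le u w).trans (by linarith)
  have hvm : dist v (mid u w) ≤ θ := by
    have hmed := hm.dist_le v u w
    rw [dist_comm v u] at hmed
    linarith [max_le huv hvw]
  rw [dist_comm] at hvm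
  have hτ : IsRipsSimplex t ![u, mid u w, v, w] :=
    isRipsSimplex_vec_four (by linarith) (by linarith) huw (by linarith) (by linarith)
      (by linarith)
  refine flatCorrection_mem_of_face_one hτ (flatCorrection_mem_of_le hvm hmw hvw) ?_
    (flatCorrection_mem_of_le hum huv hvm)
  rw [flatCorrection_flat_eq_zero 𝕜 mid θ hlong hum hmw]
  exact zero_mem _

lemma flatCorrection_mem_of_isRipsSimplex {x y z : X} (hxy : dist x y ≤ t)
    (hxz : dist x z ≤ t) (hyz : dist y z ≤ t) :
    flatCorrection 𝕜 mid θ (single ![x, y, z] 1) ∈ smallModBoundaries 𝕜 θ t := by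
  by_cases hyz_long : θ < dist y z
  · have hym : dist y (mid y z) ≤ θ := (hm.dist_left_le y z).trans (by linarith)
    have hmz : dist (mid y z) z ≤ θ := (hm.dist_right_le y z).trans (by linarith)
    have hxm : dist x (mid y z) ≤ θ := by
      linarith [hm.dist_le x y z, max_le hxy hxz]
    have hτ : IsRipsSimplex t ![x, y, mid y z, z] :=
      isRipsSimplex_vec_four hxy (by linarith) hxz (by linarith) hyz (by linarith)
    refine flatCorrection_mem_of_face_two hτ ?_
      (flatCorrection_mem_of_short_01_12 hm hδ hθ hxm hxz hmz)
      (flatCorrection_mem_of_short_02_12 hm hδ hθ hxy hxm hym)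
    rw [flatCorrection_flat_eq_zero 𝕜 mid θ hyz_long hym hmz]
    exact zero_mem _
  by_cases hxz_long : θ < dist x z
  · have hxm : dist x (mid x z) ≤ θ := (hm.dist_left_le x z).trans (by linarith)
    have hmz : dist (mid x z) z ≤ θ := (hm.dist_right_le x z).trans (by linarith)
    have hym : dist y (mid x z) ≤ θ := by
      have hmed := hm.dist_le y x z
      rw [dist_comm y x] at hmed
      linarith [max_le hxy hyz]
    rw [dist_comm] at hym
    have hτ : IsRipsSimplex t ![x, mid x z, y, z] :=
      isRipsSimplex_vec_four (by linarith) hxy hxz (by linarith) (by linarith) hyz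
    refine flatCorrection_mem_of_face_one hτ
      (flatCorrection_mem_of_le hym hmz (not_lt.1 hyz_long)) ?_
      (flatCorrection_mem_of_short_01_12 hm hδ hθ hxm hxy hym)
    rw [flatCorrection_flat_eq_zero 𝕜 mid θ hxz_long hxm hmz]
    exact zero_mem _
  exact flatCorrection_mem_of_short_02_12 hm hδ hθ hxy (not_lt.1 hxz_long) (not_lt.1 hyz_long)

lemma chainsIn_le_comap_flatCorrection :
    chainsIn 𝕜 3 (IsRipsSimplex t) ≤
      (smallModBoundaries 𝕜 θ t).comap (flatCorrection 𝕜 mid θ) := by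
  refine Submodule.span_le.2 ?_
  rintro _ ⟨σ, hσ, rfl⟩
  rw [show σ = ![σ 0, σ 1, σ 2] from (FinVec.etaExpand_eq σ).symm]
  exact flatCorrection_mem_of_isRipsSimplex hm hδ hθ (hσ 0 1) (hσ 0 2) (hσ 1 2)

lemma exists_cycle_sub_mem_ripsBoundaries {c : (Fin 3 → X) →₀ 𝕜}
    (hc : c ∈ chainsIn 𝕜 3 (IsRipsSimplex t)) (hcyc : bdry 𝕜 X 2 c = 0) :
    ∃ c' ∈ chainsIn 𝕜 3 (IsRipsSimplex θ),
      bdry 𝕜 X 2 c' = 0 ∧ c - c' ∈ ripsBoundaries 𝕜 t := by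
  have hsplit := chainsIn_le_comap_flatCorrection hm hδ hθ hc
  rw [Submodule.mem_comap, flatCorrection_of_bdry_eq_zero 𝕜 mid θ hcyc] at hsplit
  obtain ⟨c', hc', _, ⟨b, hb, rfl⟩, hsum⟩ := Submodule.mem_sup.1 hsplit
  refine ⟨c', hc', ?_, ?_⟩
  · rw [eq_sub_of_add_eq hsum, map_sub, hcyc, bdry_bdry, sub_zero]
  · rw [← hsum, add_sub_cancel_left]
    exact Submodule.mem_map_of_mem hb

end Reduction

section Iteration

variable {𝕜 : Type*} [Field 𝕜] [MetricSpace X] {mid : X → X → X} {δ p q : ℝ}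

lemma exists_cycle_homologous_of_le {t : ℝ} (htp : t ≤ p) {c : (Fin 3 → X) →₀ 𝕜}
    (hc : c ∈ chainsIn 𝕜 3 (IsRipsSimplex t)) (hcyc : bdry 𝕜 X 2 c = 0) :
    ∃ c' ∈ chainsIn 𝕜 3 (IsRipsSimplex p),
      bdry 𝕜 X 2 c' = 0 ∧ c - c' ∈ ripsBoundaries 𝕜 q :=
  ⟨c, chainsIn_mono 𝕜 (fun _ hσ => hσ.mono htp) hc, hcyc, by simp⟩

lemma exists_cycle_homologous (hm : IsHyperbolicMidpoint δ mid) (hδ : 0 ≤ δ) (hp : 2 * δ < p)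
    (n : ℕ) {t : ℝ} (htq : t ≤ q) (ht : 2 * δ + (2 / 3) ^ n * (t - 2 * δ) ≤ p)
    {c : (Fin 3 → X) →₀ 𝕜} (hc : c ∈ chainsIn 𝕜 3 (IsRipsSimplex t))
    (hcyc : bdry 𝕜 X 2 c = 0) :
    ∃ c' ∈ chainsIn 𝕜 3 (IsRipsSimplex p),
      bdry 𝕜 X 2 c' = 0 ∧ c - c' ∈ ripsBoundaries 𝕜 q := by
  induction n generalizing t c with
  | zero => exact exists_cycle_homologous_of_le (by simpa using ht) hc hcyc
  | succ n ih =>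
    by_cases htp : t ≤ p
    · exact exists_cycle_homologous_of_le htp hc hcyc
    obtain ⟨c₁, hc₁, hcyc₁, hcc₁⟩ :=
      exists_cycle_sub_mem_ripsBoundaries (θ := 2 * (δ + t) / 3) hm hδ (by linarith) hc hcyc
    obtain ⟨c', hc', hcyc', hc₁c'⟩ := ih (by linarith)
      (by calc _ = 2 * δ + (2 / 3) ^ (n + 1) * (t - 2 * δ) := by ring
               _ ≤ p := ht) hc₁ hcyc₁
    refine ⟨c', hc', hcyc', ?_⟩
    rw [← sub_add_sub_cancel c c₁ c']
    exact add_mem (ripsBoundaries_mono 𝕜 htq hcc₁) hc₁c'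

end Iteration

section Geodesic

variable [MetricSpace X]

variable (X) in
def ThinGeodesicTriangles (δ : ℝ) : Prop :=
  ∀ (x y z : X) (gxy gyz gzx : ℝ → X),
    IsGeodesicFrom gxy x y → IsGeodesicFrom gyz y z → IsGeodesicFrom gzx z x →
      (∀ t ∈ Set.Icc 0 ((dist z x + dist x y - dist y z) / 2),
          dist (gxy t) (gzx (dist z x - t)) ≤ δ) ∧
      (∀ t ∈ Set.Icc 0 ((dist x y + dist y z - dist z x) / 2),
          dist (gyz t) (gxy (dist x y - t)) ≤ δ) ∧
      (∀ t ∈ Set.Icc 0 ((dist y z + dist z x - dist x y) / 2),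
          dist (gzx t) (gyz (dist y z - t)) ≤ δ)

lemma IsGeodesicFrom.dist_left {g : ℝ → X} {x y : X} (hg : IsGeodesicFrom g x y) {s : ℝ}
    (hs : s ∈ Set.Icc 0 (dist x y)) : dist x (g s) = s := by
  obtain ⟨h0, -, hiso⟩ := hg
  rw [← h0, hiso 0 ⟨le_rfl, dist_nonneg⟩ s hs, zero_sub, abs_neg, abs_of_nonneg hs.1]

lemma IsGeodesicFrom.dist_right {g : ℝ → X} {x y : X} (hg : IsGeodesicFrom g x y) {s : ℝ}
    (hs : s ∈ Set.Icc 0 (dist x y)) : dist (g s) y = dist x y - s := by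
  obtain ⟨-, h1, hiso⟩ := hg
  have := hiso s hs (dist x y) ⟨dist_nonneg, le_rfl⟩
  rw [h1] at this
  rw [this, abs_of_nonpos (by linarith [hs.2]), neg_sub]

lemma half_dist_mem_Icc (u v : X) : dist u v / 2 ∈ Set.Icc 0 (dist u v) :=
  ⟨by positivity, by linarith [dist_nonneg (x := u) (y := v)]⟩

variable {δ : ℝ} {geod : X → X → ℝ → X}

/-- Go through the point of `[x, y]` (or of `[z, x]`, whichever side is longer) at distance
`dist y z / 2` from `y` (resp. `z`); thinness puts it `δ`-close to the midpoint of `[y, z]`. -/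
lemma ThinGeodesicTriangles.dist_midpoint_le (hX : ThinGeodesicTriangles X δ)
    (hg : ∀ x y, IsGeodesicFrom (geod x y) x y) (x y z : X) :
    dist x (geod y z (dist y z / 2)) ≤ δ + max (dist x y) (dist x z) - dist y z / 2 := by
  obtain ⟨-, hy, hz⟩ := hX x y z _ _ _ (hg x y) (hg y z) (hg z x)
  have hyz := dist_triangle_left y z x
  rw [dist_comm z x] at hy hz
  rcases le_total (dist x z) (dist x y) with hle | hle
  · have hthin := hy (dist y z / 2) ⟨by positivity, by linarith⟩
    have hfoot := (hg x y).dist_left (s := dist x y - dist y z / 2) ⟨by linarith, by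
      linarith [dist_nonneg (x := y) (y := z)]⟩
    have htri := dist_triangle x (geod x y (dist x y - dist y z / 2)) (geod y z (dist y z / 2))
    rw [dist_comm] at hthin
    linarith [le_max_left (dist x y) (dist x z)]
  · have hthin := hz (dist y z / 2) ⟨by positivity, by linarith⟩
    rw [sub_half] at hthin
    have hfoot := (hg z x).dist_right (s := dist y z / 2) ⟨by positivity, by
      rw [dist_comm z x]; linarith⟩
    have htri := dist_triangle x (geod z x (dist y z / 2)) (geod y z (dist y z / 2))
    rw [dist_comm z x] at hfoot
    linarith [le_max_right (dist x y) (dist x z), dist_comm x (geod z x (dist y z / 2))]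

lemma ThinGeodesicTriangles.isHyperbolicMidpoint (hX : ThinGeodesicTriangles X δ)
    (hg : ∀ x y, IsGeodesicFrom (geod x y) x y) :
    IsHyperbolicMidpoint δ fun u v => geod u v (dist u v / 2) where
  dist_left_le u v := ((hg u v).dist_left (half_dist_mem_Icc u v)).le
  dist_right_le u v := by rw [(hg u v).dist_right (half_dist_mem_Icc u v)]; linarith
  dist_le := hX.dist_midpoint_le hg

end Geodesic

end

theorem stmt18_general (𝕜 : Type*) [Field 𝕜] {X : Type*} [MetricSpace X] (δ : ℝ) (hδ : 0 ≤ δ)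
    -- X is a geodesic space
    (hgeo : ∀ x y : X, ∃ g : ℝ → X, IsGeodesicFrom g x y)
    -- X is δ-hyperbolic: every geodesic triangle is δ-thin in the secant sense
    (hhyp : ∀ (x y z : X) (gxy gyz gzx : ℝ → X),
      IsGeodesicFrom gxy x y → IsGeodesicFrom gyz y z → IsGeodesicFrom gzx z x →
        (∀ t ∈ Set.Icc 0 ((dist z x + dist x y - dist y z) / 2),
            dist (gxy t) (gzx (dist z x - t)) ≤ δ) ∧
        (∀ t ∈ Set.Icc 0 ((dist x y + dist y z - dist z x) / 2),
            dist (gyz t) (gxy (dist x y - t)) ≤ δ) ∧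
        (∀ t ∈ Set.Icc 0 ((dist y z + dist z x - dist x y) / 2),
            dist (gzx t) (gyz (dist y z - t)) ≤ δ))
    (p q : ℝ) (hp : 2 * δ < p)
    -- surjectivity of H₂(Rips(X, p)) → H₂(Rips(X, q)): every 2-cycle of
    -- Rips(X, q) is homologous in Rips(X, q) to a 2-cycle of Rips(X, p)
    (c : (Fin 3 → X) →₀ 𝕜)
    (hc : c ∈ chainsIn 𝕜 3 (fun σ : Fin 3 → X => ∀ i j, dist (σ i) (σ j) ≤ q))
    (hcyc : bdry 𝕜 X 2 c = 0) :
    ∃ c' ∈ chainsIn 𝕜 3 (fun σ : Fin 3 → X => ∀ i j, dist (σ i) (σ j) ≤ p),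
      bdry 𝕜 X 2 c' = 0 ∧
      ∃ b ∈ chainsIn 𝕜 4 (fun σ : Fin 4 → X => ∀ i j, dist (σ i) (σ j) ≤ q),
        c - c' = bdry 𝕜 X 3 b := by
  choose geod hgeod using hgeo
  have hm := ThinGeodesicTriangles.isHyperbolicMidpoint hhyp hgeod
  have hlim : Filter.Tendsto (fun n : ℕ => (2 / 3 : ℝ) ^ n * (q - 2 * δ)) Filter.atTop
      (nhds 0) := by
    simpa using (tendsto_pow_atTop_nhds_zero_of_lt_one (by norm_num) (by norm_num)).mul_const
      (q - 2 * δ)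
  obtain ⟨n, hn⟩ := (hlim.eventually (gt_mem_nhds (sub_pos.2 hp))).exists
  obtain ⟨c', hc', hcyc', hcc'⟩ :=
    exists_cycle_homologous hm hδ hp n le_rfl (by linarith) hc hcyc
  obtain ⟨b, hb, hbc⟩ := Submodule.mem_map.1 hcc'
  exact ⟨c', hc', hcyc', b, hb, hbc.symm⟩

theorem stmt18 (𝕜 : Type*) [Field 𝕜] {X : Type*} [MetricSpace X] (δ : ℝ) (hδ : 0 ≤ δ)
    -- X is a geodesic space
    (hgeo : ∀ x y : X, ∃ g : ℝ → X, IsGeodesicFrom g x y)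
    -- X is δ-hyperbolic: every geodesic triangle is δ-thin in the secant sense
    (hhyp : ∀ (x y z : X) (gxy gyz gzx : ℝ → X),
      IsGeodesicFrom gxy x y → IsGeodesicFrom gyz y z → IsGeodesicFrom gzx z x →
        (∀ t ∈ Set.Icc 0 ((dist z x + dist x y - dist y z) / 2),
            dist (gxy t) (gzx (dist z x - t)) ≤ δ) ∧
        (∀ t ∈ Set.Icc 0 ((dist x y + dist y z - dist z x) / 2),
            dist (gyz t) (gxy (dist x y - t)) ≤ δ) ∧
        (∀ t ∈ Set.Icc 0 ((dist y z + dist z x - dist x y) / 2),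
            dist (gzx t) (gyz (dist y z - t)) ≤ δ))
    (p q : ℝ) (hp : 2 * δ < p) (hpq : p < q)
    -- surjectivity of H₂(Rips(X, p)) → H₂(Rips(X, q)): every 2-cycle of
    -- Rips(X, q) is homologous in Rips(X, q) to a 2-cycle of Rips(X, p)
    (c : (Fin 3 → X) →₀ 𝕜)
    (hc : c ∈ chainsIn 𝕜 3 (fun σ : Fin 3 → X => ∀ i j, dist (σ i) (σ j) ≤ q))
    (hcyc : bdry 𝕜 X 2 c = 0) :
    ∃ c' ∈ chainsIn 𝕜 3 (fun σ : Fin 3 → X => ∀ i j, dist (σ i) (σ j) ≤ p),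
      bdry 𝕜 X 2 c' = 0 ∧
      ∃ b ∈ chainsIn 𝕜 4 (fun σ : Fin 4 → X => ∀ i j, dist (σ i) (σ j) ≤ q),
        c - c' = bdry 𝕜 X 3 b :=
  stmt18_general 𝕜 δ hδ hgeo hhyp p q hp c hc hcyc
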